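/- Let μ̄ be the sample mean of n i.i.d. samples from N(μ, I_d). Then for every t > 0, with probability at least 1 - exp(-t^2/2), one has ||μ - μ̄|| < sqrt((d + sqrt(2d)*t + t^2)/n). -/

import Mathlib

/-!
With `W = μ - μ̄`, the vector `√n • W` is standard Gaussian, so `n‖W‖²` is `χ²(d)` and the claim
is the Laurent–Massart upper tail bound. Its moment generating function
`𝔼 exp (c n ‖W‖²) = (1 - 2c)^(-d/2)` is computed without determining the law of `μ̄`:
linearizing the square with an independent standard Gaussian vector `g`,
`exp (c n ‖W‖²) = 𝔼_g exp (√(2cn) ⟪g, W⟫)`, and exchanging the two expectations by Tonelli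
leaves an inner integrand that is a product over the samples. The Chernoff bound at `c = t / (√(2d) + 2t)` then
yields `exp (-t²/2)`, using `log x ≤ sinh (log x)` for `x ≥ 1`.
-/

open MeasureTheory ProbabilityTheory Real
open scoped ENNReal NNReal

lemma lintegral_fintype_prod_eq_prod {ι : Type*} [Fintype ι] {α : ι → Type*}
    [∀ i, MeasurableSpace (α i)] (ν : ∀ i, Measure (α i)) [∀ i, IsProbabilityMeasure (ν i)]
    {f : ∀ i, α i → ℝ≥0∞} (hf : ∀ i, Measurable (f i)) :
    ∫⁻ x, ∏ i, f i (x i) ∂Measure.pi ν = ∏ i, ∫⁻ y, f i y ∂ν i := by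
  rw [lintegral_prod_eq_prod_lintegral_of_indepFun _ _
    (iIndepFun_pi fun i ↦ (hf i).aemeasurable) fun i ↦ (hf i).comp (measurable_pi_apply i)]
  exact Finset.prod_congr rfl fun i _ ↦ (measurePreserving_eval ν i).lintegral_comp (hf i)

lemma lintegral_exp_mul_sub_gaussianReal (m : ℝ) (v : ℝ≥0) (s : ℝ) :
    ∫⁻ x, ENNReal.ofReal (exp (s * (x - m))) ∂gaussianReal m v =
      ENNReal.ofReal (exp (v * s ^ 2 / 2)) := by
  have hmgf : ∫ x, exp (s * x) ∂gaussianReal m v = exp (m * s + v * s ^ 2 / 2) :=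
    congrFun mgf_fun_id_gaussianReal s
  have hsplit : ∀ x, exp (s * (x - m)) = exp (-(s * m)) * exp (s * x) := fun x ↦ by
    rw [← exp_add]; congr 1; ring
  simp_rw [hsplit]
  rw [← ofReal_integral_eq_lintegral_ofReal ((integrable_exp_mul_gaussianReal s).const_mul _)
    (Filter.Eventually.of_forall fun _ ↦ by positivity), integral_const_mul, hmgf, ← exp_add]
  ring_nf

lemma lintegral_exp_mul_sq_gaussianReal {v : ℝ≥0} (hv : v ≠ 0) {c : ℝ} (hc : 2 * c * v < 1) :
    ∫⁻ x, ENNReal.ofReal (exp (c * x ^ 2)) ∂gaussianReal 0 v =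
      ENNReal.ofReal (√(1 - 2 * c * v))⁻¹ := by
  have hb : 0 < (2 * v : ℝ)⁻¹ - c := by
    rw [sub_pos, ← one_div, lt_div_iff₀ (by positivity)]
    linarith
  rw [gaussianReal_of_var_ne_zero 0 hv,
    lintegral_withDensity_eq_lintegral_mul _ (measurable_gaussianPDF 0 v) (by fun_prop)]
  have hdensity : ∀ x, gaussianPDF 0 v x * ENNReal.ofReal (exp (c * x ^ 2)) =
      ENNReal.ofReal ((√(2 * π * v))⁻¹ * exp (-((2 * v : ℝ)⁻¹ - c) * x ^ 2)) := fun x ↦ by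
    rw [gaussianPDF, ← ENNReal.ofReal_mul (gaussianPDFReal_nonneg _ _ _), gaussianPDFReal,
      mul_assoc, ← exp_add]
    congr 3
    field_simp
    ring
  simp_rw [Pi.mul_apply, hdensity]
  rw [← ofReal_integral_eq_lintegral_ofReal ((integrable_exp_neg_mul_sq hb).const_mul _)
    (Filter.Eventually.of_forall fun _ ↦ by positivity), integral_const_mul, integral_gaussian,
    ← sqrt_inv, ← sqrt_mul (by positivity), ← sqrt_inv]
  congr 2
  field_simp

lemma lintegral_exp_sum_mul_sub_pi_gaussianReal {ι : Type*} [Fintype ι] (m : ι → ℝ)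
    (v : ι → ℝ≥0) (w : ι → ℝ) :
    ∫⁻ x, ENNReal.ofReal (exp (∑ i, w i * (x i - m i)))
        ∂Measure.pi (fun i ↦ gaussianReal (m i) (v i)) =
      ENNReal.ofReal (exp (∑ i, v i * w i ^ 2 / 2)) := by
  simp_rw [exp_sum, ENNReal.ofReal_prod_of_nonneg fun _ _ ↦ (exp_pos _).le]
  rw [lintegral_fintype_prod_eq_prod (f := fun i y ↦ ENNReal.ofReal (exp (w i * (y - m i)))) _
    fun _ ↦ by fun_prop]
  simp_rw [lintegral_exp_mul_sub_gaussianReal]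

noncomputable def sampleMean {n : ℕ} {ι : Type*} (X : Fin n → ι → ℝ) (j : ι) : ℝ :=
  (n : ℝ)⁻¹ * ∑ i, X i j

lemma lintegral_exp_sum_mul_sub_sampleMean {ι : Type*} [Fintype ι] {n : ℕ} (hn : 0 < n)
    (μ g : ι → ℝ) :
    ∫⁻ X, ENNReal.ofReal (exp (∑ j, g j * (μ j - sampleMean X j)))
        ∂Measure.pi (fun _ : Fin n ↦ Measure.pi fun j ↦ gaussianReal (μ j) 1) =
      ENNReal.ofReal (exp (∑ j, g j ^ 2 / (2 * n))) := by
  have hrows : ∀ X : Fin n → ι → ℝ, ENNReal.ofReal (exp (∑ j, g j * (μ j - sampleMean X j))) =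
      ∏ i, ENNReal.ofReal (exp (∑ j, -(g j / n) * (X i j - μ j))) := fun X ↦ by
    rw [← ENNReal.ofReal_prod_of_nonneg fun _ _ ↦ (exp_pos _).le, ← exp_sum, Finset.sum_comm]
    congr 2
    refine Finset.sum_congr rfl fun j _ ↦ ?_
    simp only [sampleMean, ← Finset.mul_sum, Finset.sum_sub_distrib, Finset.sum_const,
      Finset.card_univ, Fintype.card_fin, nsmul_eq_mul]
    field_simp
    ring
  rw [lintegral_congr hrows, lintegral_fintype_prod_eq_prod (α := fun _ ↦ ι → ℝ)
    (f := fun _ x ↦ ENNReal.ofReal (exp (∑ j, -(g j / n) * (x j - μ j)))) _ fun _ ↦ by fun_prop]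
  simp_rw [lintegral_exp_sum_mul_sub_pi_gaussianReal]
  rw [Finset.prod_const, Finset.card_univ, Fintype.card_fin,
    ← ENNReal.ofReal_pow (exp_pos _).le, ← exp_nat_mul, Finset.mul_sum]
  congr 3 with j
  rw [NNReal.coe_one]
  field_simp

lemma lintegral_exp_mul_sum_sq_sub_sampleMean {ι : Type*} [Fintype ι] {n : ℕ} (hn : 0 < n)
    (μ : ι → ℝ) {c : ℝ} (hc0 : 0 ≤ c) (hc : c < 1 / 2) :
    ∫⁻ X, ENNReal.ofReal (exp (c * n * ∑ j, (μ j - sampleMean X j) ^ 2))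
        ∂Measure.pi (fun _ : Fin n ↦ Measure.pi fun j ↦ gaussianReal (μ j) 1) =
      ENNReal.ofReal ((√(1 - 2 * c))⁻¹ ^ Fintype.card ι) := by
  set P := Measure.pi (fun _ : Fin n ↦ Measure.pi fun j ↦ gaussianReal (μ j) 1)
  set Γ := Measure.pi (fun _ : ι ↦ gaussianReal 0 1)
  set b := √(2 * c * n)
  have hb : b ^ 2 = 2 * c * n := sq_sqrt (by positivity)
  have hlin : ∀ w : ι → ℝ, ∫⁻ g, ENNReal.ofReal (exp (∑ j, w j * g j)) ∂Γ =
      ENNReal.ofReal (exp (∑ j, w j ^ 2 / 2)) := fun w ↦ by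
    simpa using lintegral_exp_sum_mul_sub_pi_gaussianReal (fun _ : ι ↦ 0) (fun _ ↦ 1) w
  have hmeas : Measurable (Function.uncurry fun (X : Fin n → ι → ℝ) (g : ι → ℝ) ↦
      ENNReal.ofReal (exp (∑ j, b * g j * (μ j - sampleMean X j)))) := by
    unfold sampleMean; fun_prop
  calc ∫⁻ X, ENNReal.ofReal (exp (c * n * ∑ j, (μ j - sampleMean X j) ^ 2)) ∂P
      = ∫⁻ X, ∫⁻ g, ENNReal.ofReal (exp (∑ j, b * g j * (μ j - sampleMean X j))) ∂Γ ∂P := by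
        refine lintegral_congr fun X ↦ ?_
        convert (hlin fun j ↦ b * (μ j - sampleMean X j)).symm using 5 with g
        · simp_rw [mul_pow, hb, Finset.mul_sum]
          exact Finset.sum_congr rfl fun j _ ↦ by ring
        · exact Finset.sum_congr rfl fun j _ ↦ by ring
    _ = ∫⁻ g, ∫⁻ X, ENNReal.ofReal (exp (∑ j, b * g j * (μ j - sampleMean X j))) ∂P ∂Γ :=
        lintegral_lintegral_swap hmeas.aemeasurable
    _ = ∫⁻ g, ∏ j, ENNReal.ofReal (exp (c * g j ^ 2)) ∂Γ := by
        refine lintegral_congr fun g ↦ ?_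
        rw [lintegral_exp_sum_mul_sub_sampleMean hn,
          ← ENNReal.ofReal_prod_of_nonneg fun _ _ ↦ (exp_pos _).le, ← exp_sum]
        congr 3 with j
        rw [mul_pow, hb]
        field_simp
    _ = ENNReal.ofReal ((√(1 - 2 * c))⁻¹ ^ Fintype.card ι) := by
        rw [lintegral_fintype_prod_eq_prod (f := fun _ y ↦ ENNReal.ofReal (exp (c * y ^ 2))) _
          fun _ ↦ by fun_prop]
        have hc' : 2 * c * ((1 : ℝ≥0) : ℝ) < 1 := by push_cast; linarith
        simp_rw [lintegral_exp_mul_sq_gaussianReal one_ne_zero hc', NNReal.coe_one, mul_one]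
        rw [Finset.prod_const, ← ENNReal.ofReal_pow (by positivity), Finset.card_univ]

lemma measure_ge_le_exp_mul_lintegral_exp {α : Type*} [MeasurableSpace α] (ν : Measure α)
    {f : α → ℝ} (hf : AEMeasurable f ν) {c : ℝ} (hc : 0 ≤ c) (a : ℝ) :
    ν {x | a ≤ f x} ≤
      ENNReal.ofReal (exp (-(c * a))) * ∫⁻ x, ENNReal.ofReal (exp (c * f x)) ∂ν := by
  calc ν {x | a ≤ f x}
      ≤ ν {x | ENNReal.ofReal (exp (c * a)) ≤ ENNReal.ofReal (exp (c * f x))} :=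
        measure_mono fun x hx ↦ ENNReal.ofReal_le_ofReal (exp_le_exp.mpr (by gcongr; exact hx))
    _ ≤ (∫⁻ x, ENNReal.ofReal (exp (c * f x)) ∂ν) / ENNReal.ofReal (exp (c * a)) :=
        meas_ge_le_lintegral_div (by fun_prop) (by simp [exp_pos]) ENNReal.ofReal_ne_top
    _ = _ := by
        rw [ENNReal.div_eq_inv_mul, ← ENNReal.ofReal_inv_of_pos (exp_pos _), ← exp_neg]

lemma log_le_half_sub_inv {x : ℝ} (hx : 1 ≤ x) : log x ≤ (x - x⁻¹) / 2 := by
  rw [← sinh_log (by positivity)]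
  exact self_le_sinh_iff.mpr (log_nonneg hx)

lemma exp_neg_mul_mul_inv_sqrt_pow_le {d : ℕ} (hd : 0 < d) {t : ℝ} (ht : 0 < t) :
    exp (-(t / (√(2 * d) + 2 * t) * (d + √(2 * d) * t + t ^ 2))) *
      (√(1 - 2 * (t / (√(2 * d) + 2 * t))))⁻¹ ^ d ≤ exp (-t ^ 2 / 2) := by
  set s := √(2 * d)
  have hs : 0 < s := by positivity
  have hd' : (d : ℝ) = s ^ 2 / 2 := by rw [sq_sqrt (by positivity)]; ring
  set x := (s + 2 * t) / s with hx_def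
  have hx : 1 ≤ x := by rw [le_div_iff₀ hs]; linarith
  have hpow : (√(1 - 2 * (t / (s + 2 * t))))⁻¹ ^ d = exp (d * (log x / 2)) := by
    have h : 1 - 2 * (t / (s + 2 * t)) = x⁻¹ := by rw [hx_def]; field_simp; ring
    rw [h, sqrt_inv, inv_inv, ← exp_log (by positivity : 0 < x), ← exp_half, log_exp,
      ← exp_nat_mul]
  rw [hpow, ← exp_add, exp_le_exp]
  have hlog := mul_le_mul_of_nonneg_left (log_le_half_sub_inv hx)
    (by positivity : (0 : ℝ) ≤ d / 2)
  calc -(t / (s + 2 * t) * (d + s * t + t ^ 2)) + d * (log x / 2)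
      ≤ -(t / (s + 2 * t) * (d + s * t + t ^ 2)) + d / 2 * ((x - x⁻¹) / 2) := by linarith
    _ = -t ^ 2 / 2 := by rw [hd', hx_def]; field_simp; ring

lemma measure_mul_sum_sq_sub_sampleMean_ge_le {d n : ℕ} (hn : 0 < n) (μ : Fin d → ℝ) {t : ℝ}
    (ht : 0 < t) :
    Measure.pi (fun _ : Fin n ↦ Measure.pi fun j ↦ gaussianReal (μ j) 1)
        {X | d + √(2 * d) * t + t ^ 2 ≤ n * ∑ j, (μ j - sampleMean X j) ^ 2} ≤
      ENNReal.ofReal (exp (-t ^ 2 / 2)) := by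
  rcases d.eq_zero_or_pos with rfl | hd
  · have hempty : {X : Fin n → Fin 0 → ℝ |
        (0 : ℕ) + √(2 * (0 : ℕ)) * t + t ^ 2 ≤ n * ∑ j, (μ j - sampleMean X j) ^ 2} = ∅ := by
      ext X
      simp [ht.ne']
    rw [hempty, measure_empty]
    exact zero_le
  set c := t / (√(2 * d) + 2 * t)
  have hc : c < 1 / 2 := by
    rw [div_lt_iff₀ (by positivity)]
    linarith [sqrt_pos.mpr (by positivity : (0 : ℝ) < 2 * d)]
  have hmeas : Measurable fun X : Fin n → Fin d → ℝ ↦ n * ∑ j, (μ j - sampleMean X j) ^ 2 := by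
    unfold sampleMean; fun_prop
  refine (measure_ge_le_exp_mul_lintegral_exp _ hmeas.aemeasurable (c := c) (by positivity)
    _).trans ?_
  simp_rw [← mul_assoc]
  rw [lintegral_exp_mul_sum_sq_sub_sampleMean hn μ (by positivity) hc, Fintype.card_fin,
    ← ENNReal.ofReal_mul (exp_pos _).le]
  exact ENNReal.ofReal_le_ofReal (exp_neg_mul_mul_inv_sqrt_pow_le hd ht)

/-- Let `μ̄` be the sample mean of `n` i.i.d. samples from `N(μ, I_d)`. Then for every
`t > 0`, with probability at least `1 - exp(-t²/2)`, one has
`‖μ - μ̄‖ < √((d + √(2d)·t + t²)/n)`. -/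
theorem sample_mean_deviation_bound (d n : ℕ) (hn : 0 < n) (μ : Fin d → ℝ)
    (t : ℝ) (ht : 0 < t) :
    ENNReal.ofReal (1 - Real.exp (-t ^ 2 / 2)) ≤
      (Measure.pi fun _ : Fin n => Measure.pi fun j : Fin d => gaussianReal (μ j) 1)
        {X | Real.sqrt (∑ j, (μ j - (n : ℝ)⁻¹ * ∑ i, X i j) ^ 2)
          < Real.sqrt (((d : ℝ) + Real.sqrt (2 * d) * t + t ^ 2) / n)} := by
  set P := Measure.pi fun _ : Fin n => Measure.pi fun j : Fin d => gaussianReal (μ j) 1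
  set S := {X : Fin n → Fin d → ℝ | √(∑ j, (μ j - sampleMean X j) ^ 2)
    < √((d + √(2 * d) * t + t ^ 2) / n)}
  have htail : Sᶜ ⊆ {X | d + √(2 * d) * t + t ^ 2 ≤ n * ∑ j, (μ j - sampleMean X j) ^ 2} :=
    fun X hX ↦ by
      simp only [S, Set.mem_compl_iff, Set.mem_ofPred_eq, not_lt] at hX ⊢
      rw [sqrt_le_sqrt_iff (by positivity), div_le_iff₀ (by positivity)] at hX
      linarith
  have hcover : (1 : ℝ≥0∞) ≤ P S + P Sᶜ := by
    rw [← measure_univ (μ := P), ← Set.union_compl_self S]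
    exact measure_union_le _ _
  calc ENNReal.ofReal (1 - exp (-t ^ 2 / 2))
      = 1 - ENNReal.ofReal (exp (-t ^ 2 / 2)) := by
        rw [ENNReal.ofReal_sub _ (exp_pos _).le, ENNReal.ofReal_one]
    _ ≤ 1 - P Sᶜ := by
        gcongr
        exact (measure_mono htail).trans (measure_mul_sum_sq_sub_sampleMean_ge_le hn μ ht)
    _ ≤ P S := tsub_le_iff_right.mpr hcover
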